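/- Let n ≥ 3 and let m be a positive integer with m > n^{π(n)}. Then the binomial coefficient C(m+n, n) admits a Grimm factorization; in particular, C(m+n, n) has at least n distinct prime factors. -/

import Mathlib

open Finset Nat

/-!
Send every prime `p` to an index `i ∈ [1, n]` at which `v_p(m + i)` is maximal, and let `a i` be
the product of the prime-power parts of `C(m + n, n)` at the primes sent to `i`. By Kummer's
theorem, a carry at `p ^ k` when adding `m` and `n` produces a multiple of `p ^ k` in
`(m, m + n]`, so `v_p C(m + n, n) ≤ max_i v_p(m + i)` and `a i ∣ m + i`. Since
`m + i > n ^ π(n)`, some prime power `p ^ e ∥ m + i` exceeds `n`; it divides no other `m + j`, so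
`p` is sent to `i`, and the carry at `p ^ e` shows `p ∣ C(m + n, n)`. Hence `a i > 1`.
-/

lemma exists_dvd_add_of_le_mod_add_mod {q m n : ℕ} (hq : 0 < q) (h : q ≤ n % q + m % q) :
    ∃ j ∈ Icc 1 n, q ∣ m + j := by
  have hmq : m % q < q := mod_lt m hq
  have hm : m % q ≤ m := mod_le m q
  have hn : n % q ≤ n := mod_le n q
  refine ⟨q - m % q, mem_Icc.2 ⟨by omega, by omega⟩, ?_⟩
  rw [show m + (q - m % q) = m - m % q + q by omega]
  exact dvd_add (dvd_sub_mod m) dvd_rfl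

lemma le_mod_add_mod_of_dvd_add {q m n i : ℕ} (hi : i ∈ Icc 1 n) (hn : n < q)
    (h : q ∣ m + i) : q ≤ n % q + m % q := by
  obtain ⟨hi1, hin⟩ := mem_Icc.1 hi
  have hzero : (m % q + i) % q = 0 := (mod_add_mod m q i).trans (mod_eq_zero_of_dvd h)
  have hq : q ≤ m % q + i := by
    by_contra! hlt
    rw [mod_eq_of_lt hlt] at hzero
    omega
  rw [mod_eq_of_lt hn]
  omega

lemma eq_of_dvd_add_of_dvd_add {q m i j : ℕ} (hi : i < q) (hj : j < q)
    (hqi : q ∣ m + i) (hqj : q ∣ m + j) : i = j := by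
  have hmod : m + i ≡ m + j [MOD q] :=
    (modEq_zero_iff_dvd.2 hqi).trans (modEq_zero_iff_dvd.2 hqj).symm
  simpa only [ModEq, mod_eq_of_lt hi, mod_eq_of_lt hj] using hmod.add_left_cancel' m

lemma eq_of_lt_ordProj_of_factorization_le {p m n i k : ℕ} (hi : i ≤ n) (hk : k ≤ n)
    (h : n < ordProj[p] (m + i)) (hle : (m + i).factorization p ≤ (m + k).factorization p) :
    k = i :=
  eq_of_dvd_add_of_dvd_add (hk.trans_lt h) (hi.trans_lt h)
    ((pow_dvd_pow p hle).trans (ordProj_dvd _ _)) (ordProj_dvd _ _)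

lemma factorization_choose_add_le {p m n e : ℕ} (hp : p.Prime)
    (h : ∀ j ∈ Icc 1 n, (m + j).factorization p ≤ e) :
    ((m + n).choose n).factorization p ≤ e := by
  have := Fact.mk hp
  rw [factorization_def _ hp, padicValNat_choose' (lt_add_one _)]
  calc #{k ∈ Ico 1 (log p (m + n) + 1) | p ^ k ≤ n % p ^ k + m % p ^ k}
      ≤ #(Icc 1 e) := card_le_card fun k hk ↦ ?_
    _ = e := by simp
  obtain ⟨hk, hcarry⟩ := mem_filter.1 hk
  obtain ⟨j, hj, hdvd⟩ := exists_dvd_add_of_le_mod_add_mod (pow_pos hp.pos k) hcarry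
  have hj1 := (mem_Icc.1 hj).1
  have hke : k ≤ e := ((hp.pow_dvd_iff_le_factorization (by omega)).1 hdvd).trans (h j hj)
  exact mem_Icc.2 ⟨(mem_Ico.1 hk).1, hke⟩

lemma prime_dvd_choose_add_of_lt_ordProj {p m n i : ℕ} (hp : p.Prime) (hi : i ∈ Icc 1 n)
    (h : n < ordProj[p] (m + i)) : p ∣ (m + n).choose n := by
  have := Fact.mk hp
  obtain ⟨hi1, hin⟩ := mem_Icc.1 hi
  set e := (m + i).factorization p
  have he : e ≠ 0 := by
    rintro he
    rw [he, pow_zero] at h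
    omega
  have hlog : e ≤ log p (m + n) :=
    le_log_of_pow_le hp.one_lt ((ordProj_le p (by omega)).trans (by omega))
  have hcarry : e ∈ {k ∈ Ico 1 (log p (m + n) + 1) | p ^ k ≤ n % p ^ k + m % p ^ k} :=
    mem_filter.2
      ⟨mem_Ico.2 ⟨by omega, by omega⟩, le_mod_add_mod_of_dvd_add hi h (ordProj_dvd _ _)⟩
  rw [hp.dvd_iff_one_le_factorization (choose_pos (le_add_left n m)).ne', factorization_def _ hp,
    padicValNat_choose' (lt_add_one _)]
  exact card_pos.2 ⟨e, hcarry⟩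

lemma exists_prime_lt_ordProj_of_pow_primeCounting_lt {n x : ℕ} (hn : 0 < n)
    (hx : n ^ primeCounting n < x) : ∃ p, p.Prime ∧ n < ordProj[p] x := by
  by_contra! hsmall
  have hx0 : x ≠ 0 := by omega
  have hsub : x.primeFactors ⊆ primesLE n := fun p hp ↦ by
    have hv : x.factorization p ≠ 0 := by
      rwa [← Finsupp.mem_support_iff, Nat.support_factorization]
    exact mem_primesLE.2
      ⟨(le_self_pow hv p).trans (hsmall p (prime_of_mem_primeFactors hp)),
        prime_of_mem_primeFactors hp⟩
  have : x ≤ n ^ primeCounting n := calc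
    x = ∏ p ∈ x.primeFactors, ordProj[p] x := prod_primeFactors_pow_factorization hx0
    _ ≤ ∏ _p ∈ x.primeFactors, n :=
      prod_le_prod' fun p hp ↦ hsmall p (prime_of_mem_primeFactors hp)
    _ = n ^ #x.primeFactors := prod_const n
    _ ≤ n ^ primeCounting n :=
      Nat.pow_le_pow_right hn (primesLE_card_eq_primeCounting n ▸ card_le_card hsub)
  omega

def primeFiberPart (c : ℕ) (f : ℕ → ℕ) (i : ℕ) : ℕ :=
  ∏ p ∈ c.primeFactors with f p = i, ordProj[p] c

section primeFiberPart

variable {c : ℕ} {f : ℕ → ℕ} {i : ℕ}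

lemma prod_primeFiberPart {s : Finset ℕ} (hc : c ≠ 0) (hf : ∀ p ∈ c.primeFactors, f p ∈ s) :
    ∏ i ∈ s, primeFiberPart c f i = c := by
  unfold primeFiberPart
  rw [prod_fiberwise_of_maps_to hf, ← prod_primeFactors_pow_factorization hc]

lemma primeFiberPart_dvd {x : ℕ} (h : ∀ p ∈ c.primeFactors, f p = i → ordProj[p] c ∣ x) :
    primeFiberPart c f i ∣ x := by
  refine prod_dvd_of_isRelPrime (fun p hp q hq hpq ↦ ?_) fun p hp ↦ (mem_filter.1 hp).elim (h p)
  rw [Function.onFun, ← coprime_iff_isRelPrime]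
  exact ((coprime_primes (prime_of_mem_primeFactors (mem_filter.1 hp).1)
    (prime_of_mem_primeFactors (mem_filter.1 hq).1)).2 hpq).pow _ _

lemma coprime_primeFiberPart {j : ℕ} (hij : i ≠ j) :
    Coprime (primeFiberPart c f i) (primeFiberPart c f j) := by
  refine Coprime.prod_left fun p hp ↦ Coprime.prod_right fun q hq ↦ ?_
  obtain ⟨hpc, rfl⟩ := mem_filter.1 hp
  obtain ⟨hqc, rfl⟩ := mem_filter.1 hq
  exact ((coprime_primes (prime_of_mem_primeFactors hpc) (prime_of_mem_primeFactors hqc)).2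
    (by rintro rfl; exact hij rfl)).pow _ _

lemma one_lt_primeFiberPart {p : ℕ} (hp : p ∈ c.primeFactors) (hfp : f p = i) :
    1 < primeFiberPart c f i := by
  have hv : c.factorization p ≠ 0 := by
    rwa [← Finsupp.mem_support_iff, Nat.support_factorization]
  calc 1 < ordProj[p] c := one_lt_pow hv (prime_of_mem_primeFactors hp).one_lt
    _ ≤ ∏ q ∈ c.primeFactors with f q = i, ordProj[q] c :=
      single_le_prod' (f := fun q ↦ ordProj[q] c) (fun q _ ↦ ordProj_pos c q)
        (mem_filter.2 ⟨hp, hfp⟩)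

end primeFiberPart

theorem grimm_factorization_of_gt_pow_primeCounting_general
    (m n : ℕ) (hn : 3 ≤ n)
    (h : m > n ^ Nat.primeCounting n) :
    (∃ a : ℕ → ℕ,
      Nat.choose (m + n) n = ∏ i ∈ Finset.Icc 1 n, a i ∧
      (∀ i ∈ Finset.Icc 1 n, a i ∣ (m + i) ∧ 1 < a i) ∧
      (∀ i ∈ Finset.Icc 1 n, ∀ j ∈ Finset.Icc 1 n, i ≠ j →
        Nat.Coprime (a i) (a j))) ∧
    n ≤ (Nat.choose (m + n) n).primeFactors.card := by
  set C := (m + n).choose n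
  have hC : C ≠ 0 := (choose_pos (le_add_left n m)).ne'
  choose f hf hfmax using fun p ↦
    exists_max_image (Icc 1 n) (fun j ↦ (m + j).factorization p) (nonempty_Icc.2 (by omega))
  have hsurj : ∀ i ∈ Icc 1 n, ∃ p ∈ C.primeFactors, f p = i := fun i hi ↦ by
    obtain ⟨p, hp, hbig⟩ := exists_prime_lt_ordProj_of_pow_primeCounting_lt (n := n) (x := m + i)
      (by omega) (by omega)
    exact ⟨p, mem_primeFactors.2 ⟨hp, prime_dvd_choose_add_of_lt_ordProj hp hi hbig, hC⟩,
      eq_of_lt_ordProj_of_factorization_le (mem_Icc.1 hi).2 (mem_Icc.1 (hf p)).2 hbig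
        (hfmax p i hi)⟩
  have hdvd : ∀ p ∈ C.primeFactors, ordProj[p] C ∣ m + f p := fun p hp ↦
    (pow_dvd_pow p (factorization_choose_add_le (prime_of_mem_primeFactors hp) (hfmax p))).trans
      (ordProj_dvd _ _)
  refine ⟨⟨primeFiberPart C f, (prod_primeFiberPart hC fun p _ ↦ hf p).symm,
    fun i hi ↦ ⟨primeFiberPart_dvd fun p hp hpi ↦ hpi ▸ hdvd p hp, ?_⟩,
    fun i _ j _ hij ↦ coprime_primeFiberPart hij⟩, ?_⟩
  · obtain ⟨p, hp, hpi⟩ := hsurj i hi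
    exact one_lt_primeFiberPart hp hpi
  · simpa using card_le_card_of_surjOn f fun i hi ↦ hsurj i hi

/-- Erdős–Selfridge bound: if `n ≥ 3` and `m > n^π(n)`, then `C(m+n, n)` admits a
Grimm factorization; in particular it has at least `n` distinct prime factors. -/
theorem grimm_factorization_of_gt_pow_primeCounting
    (m n : ℕ) (hm : 0 < m) (hn : 3 ≤ n)
    (h : m > n ^ Nat.primeCounting n) :
    (∃ a : ℕ → ℕ,
      Nat.choose (m + n) n = ∏ i ∈ Finset.Icc 1 n, a i ∧
      (∀ i ∈ Finset.Icc 1 n, a i ∣ (m + i) ∧ 1 < a i) ∧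
      (∀ i ∈ Finset.Icc 1 n, ∀ j ∈ Finset.Icc 1 n, i ≠ j →
        Nat.Coprime (a i) (a j))) ∧
    n ≤ (Nat.choose (m + n) n).primeFactors.card :=
  grimm_factorization_of_gt_pow_primeCounting_general m n hn h
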